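/- Let $|\psi_1\rangle, \dots, |\psi_5\rangle$ be pairwise orthogonal nonzero decomposable 2-vectors in $\wedge^2 \mathbb{C}^4$ such that $|\psi_1\rangle = |a\rangle \wedge |b_1\rangle$ and $|\psi_2\rangle = |a\rangle \wedge |b_2\rangle$ for some vectors $|a\rangle, |b_1\rangle, |b_2\rangle \in \mathbb{C}^4$ (i.e., $|\psi_1\rangle$ and $|\psi_2\rangle$ share a common factor). Then the set $\{|\psi_1\rangle,\dots,|\psi_5\rangle\}$ is not a fermionic unextendible product basis; i.e., there exists a nonzero decomposable 2-vector orthogonal to all five. -/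

import Mathlib

open scoped InnerProductSpace

noncomputable section

/-- The `N`-fold tensor power of `ℂ^M`, realized as the Euclidean space with
orthonormal basis indexed by multi-indices `Fin N → Fin M`. -/
abbrev TensorPow (N M : ℕ) : Type := EuclideanSpace ℂ (Fin N → Fin M)

/-- The wedge (Slater determinant) of a family of `N` vectors in `ℂ^M`:
`|v 0⟩ ∧ ⋯ ∧ |v (N-1)⟩ = ∑ σ, sgn σ • |v σ(0), …, v σ(N-1)⟩`. -/
def wedge {N M : ℕ} (v : Fin N → EuclideanSpace ℂ (Fin M)) : TensorPow N M :=
  WithLp.toLp 2 fun x => ∑ σ : Equiv.Perm (Fin N), ((Equiv.Perm.sign σ : ℤ) : ℂ) * ∏ k, v (σ k) (x k)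

/-- The exterior power `⋀^N ℂ^M`, i.e. the subspace of antisymmetric tensors
in `(ℂ^M)^{⊗N}`. -/
def exteriorPow (N M : ℕ) : Submodule ℂ (TensorPow N M) where
  carrier := {ψ | ∀ σ : Equiv.Perm (Fin N), ∀ x : Fin N → Fin M,
    ψ (x ∘ σ) = ((Equiv.Perm.sign σ : ℤ) : ℂ) * ψ x}
  add_mem' := by
    intro a b ha hb σ x
    have h1 := ha σ x
    have h2 := hb σ x
    show a (x ∘ σ) + b (x ∘ σ) = ((Equiv.Perm.sign σ : ℤ) : ℂ) * (a x + b x)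
    rw [h1, h2]; ring
  zero_mem' := by
    intro σ x
    show (0 : ℂ) = ((Equiv.Perm.sign σ : ℤ) : ℂ) * (0 : ℂ)
    ring
  smul_mem' := by
    intro c a ha σ x
    have h1 := ha σ x
    show c * a (x ∘ σ) = ((Equiv.Perm.sign σ : ℤ) : ℂ) * (c * a x)
    rw [h1]; ring

/-- A decomposable (Slater determinant) vector in `⋀^N ℂ^M`. -/
def IsSlater {N M : ℕ} (ψ : TensorPow N M) : Prop :=
  ∃ v : Fin N → EuclideanSpace ℂ (Fin M), ψ = wedge v

/-!
Take the orthonormal basis `e₀, …, e₃` obtained by Gram–Schmidt from `a, b₁, b₂`, so that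
`ψ 0 ∝ e₀ ∧ e₁` and `ψ 1 ∝ e₀ ∧ e₂`, and pass to Plücker coordinates `p_ij` in `ℂ⁶`: on
decomposable 2-vectors the inner product becomes twice the standard one. Every other `ψ i` has
`p₀₁ = p₀₂ = 0`, so the Plücker relation `p₀₁p₂₃ - p₀₂p₁₃ + p₀₃p₁₂ = 0` makes it orthogonal to
`e₀₃` or to `e₁₂`. Five pairwise orthogonal vectors of `ℂ⁶`, each orthogonal to one of two
orthogonal vectors `u, v`, have a common nonzero orthogonal vector `y` which is itself orthogonal
to `u` or to `v`. Then `y₀₁ = y₀₂ = 0` and `y₀₃y₁₂ = 0`, so `y` satisfies the Plücker relation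
and is the Plücker vector of a nonzero decomposable 2-vector orthogonal to all five `ψ i`.
-/

open Module Submodule

section Orthogonal

variable {𝕜 E ι : Type*} [RCLike 𝕜] [NormedAddCommGroup E] [InnerProductSpace 𝕜 E]
  [FiniteDimensional 𝕜 E] [Fintype ι]

theorem orthogonal_span_range_ne_bot {X : ι → E} (hcard : Fintype.card ι < finrank 𝕜 E) :
    (span 𝕜 (Set.range X))ᗮ ≠ ⊥ := by
  rw [Ne, orthogonal_eq_bot_iff]
  intro htop
  have := finrank_range_le_card (R := 𝕜) X
  rw [Set.finrank, htop, finrank_top] at this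
  omega

theorem exists_ne_zero_orthogonal_of_inner_eq_zero_or {X : ι → E}
    (hX : Pairwise fun i j => ⟪X i, X j⟫_𝕜 = 0) {u v : E} (huv : ⟪u, v⟫_𝕜 = 0)
    (hXuv : ∀ i, ⟪u, X i⟫_𝕜 = 0 ∨ ⟪v, X i⟫_𝕜 = 0) (hcard : Fintype.card ι < finrank 𝕜 E) :
    ∃ y ≠ 0, (∀ i, ⟪X i, y⟫_𝕜 = 0) ∧ (⟪u, y⟫_𝕜 = 0 ∨ ⟪v, y⟫_𝕜 = 0) := by
  set W := span 𝕜 (X '' {i | ⟪u, X i⟫_𝕜 ≠ 0})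
  have hvW : W ≤ (𝕜 ∙ v)ᗮ := span_le.mpr <| by
    rintro _ ⟨j, hj, rfl⟩
    exact mem_orthogonal_singleton_iff_inner_right.mpr ((hXuv j).resolve_left hj)
  have hXW : ∀ i, ⟪u, X i⟫_𝕜 = 0 → W ≤ (𝕜 ∙ X i)ᗮ := fun i hi => span_le.mpr <| by
    rintro _ ⟨j, hj, rfl⟩
    exact mem_orthogonal_singleton_iff_inner_right.mpr (hX fun h => hj (h ▸ hi))
  -- `u₁` is orthogonal to every `X i` and to `v`; if it vanishes, `u ∈ W` instead.
  obtain ⟨p, hp, u₁, hu₁, hu⟩ := W.exists_add_mem_mem_orthogonal u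
  by_cases h : u₁ = 0
  · obtain ⟨z, hz, hz0⟩ :=
      exists_mem_ne_zero_of_ne_bot (orthogonal_span_range_ne_bot (X := X) hcard)
    refine ⟨z, hz0, fun i => inner_right_of_mem_orthogonal (subset_span (Set.mem_range_self i)) hz,
      Or.inl ?_⟩
    rw [hu, h, add_zero]
    exact inner_right_of_mem_orthogonal (span_mono (Set.image_subset_range _ _) hp) hz
  · refine ⟨u₁, h, fun i => ?_, Or.inr ?_⟩
    · by_cases hi : ⟪u, X i⟫_𝕜 = 0
      · have hXp : ⟪X i, p⟫_𝕜 = 0 := mem_orthogonal_singleton_iff_inner_right.mp (hXW i hi hp)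
        rw [inner_eq_zero_symm, hu, inner_add_right, hXp, zero_add] at hi
        exact hi
      · exact inner_right_of_mem_orthogonal (subset_span (Set.mem_image_of_mem X hi)) hu₁
    · have hvp : ⟪v, p⟫_𝕜 = 0 := mem_orthogonal_singleton_iff_inner_right.mp (hvW hp)
      rw [inner_eq_zero_symm, hu, inner_add_right, hvp, zero_add] at huv
      exact huv

end Orthogonal

open scoped ComplexConjugate

lemma wedge_pair_apply {M : ℕ} (v w : EuclideanSpace ℂ (Fin M)) (x : Fin 2 → Fin M) :
    wedge ![v, w] x = v (x 0) * w (x 1) - w (x 0) * v (x 1) := by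
  have huniv : (Finset.univ : Finset (Equiv.Perm (Fin 2))) = {1, Equiv.swap 0 1} := by decide
  simp only [wedge, WithLp.ofLp_toLp, huniv]
  rw [Finset.sum_pair (by decide)]
  simp [Equiv.Perm.sign_swap (by decide : (0 : Fin 2) ≠ 1), Fin.prod_univ_two]
  ring

lemma inner_wedge_pair {M : ℕ} (v w v' w' : EuclideanSpace ℂ (Fin M)) :
    ⟪wedge ![v, w], wedge ![v', w']⟫_ℂ
      = 2 * (⟪v, v'⟫_ℂ * ⟪w, w'⟫_ℂ - ⟪v, w'⟫_ℂ * ⟪w, v'⟫_ℂ) := by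
  set G : Fin M → Fin M → ℂ := fun i j =>
    v' i * conj (v i) * (w' j * conj (w j)) - w' i * conj (v i) * (v' j * conj (w j))
  have hsum : ∀ f : (Fin 2 → Fin M) → ℂ, ∑ x, f x = ∑ i, ∑ j, f ![i, j] := fun f => by
    rw [← (finTwoArrowEquiv (Fin M)).symm.sum_comp, Fintype.sum_prod_type]
    rfl
  calc ⟪wedge ![v, w], wedge ![v', w']⟫_ℂ = ∑ i, ∑ j, (G i j + G j i) := by
        simp only [PiLp.inner_apply, RCLike.inner_apply, hsum, wedge_pair_apply, G]
        refine Finset.sum_congr rfl fun i _ => Finset.sum_congr rfl fun j _ => ?_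
        simp only [Matrix.cons_val_zero, Matrix.cons_val_one, map_sub, map_mul]
        ring
    _ = 2 * ∑ i, ∑ j, G i j := by
        simp only [Finset.sum_add_distrib]
        rw [Finset.sum_comm (f := fun i j => G j i)]
        ring
    _ = _ := by
        simp only [G, Finset.sum_sub_distrib, ← Finset.sum_mul_sum, PiLp.inner_apply,
          RCLike.inner_apply]

lemma inner_wedge_linearIsometryEquiv {M M' : ℕ}
    (f : EuclideanSpace ℂ (Fin M) ≃ₗᵢ[ℂ] EuclideanSpace ℂ (Fin M'))
    (v w v' w' : EuclideanSpace ℂ (Fin M)) :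
    ⟪wedge ![f v, f w], wedge ![f v', f w']⟫_ℂ = ⟪wedge ![v, w], wedge ![v', w']⟫_ℂ := by
  simp only [inner_wedge_pair, LinearIsometryEquiv.inner_map_map]

lemma IsSlater.exists_eq_wedge_pair {M : ℕ} {ψ : TensorPow 2 M} (hψ : IsSlater ψ) :
    ∃ v w, ψ = wedge ![v, w] := by
  obtain ⟨u, rfl⟩ := hψ
  exact ⟨u 0, u 1, congrArg wedge (funext fun i => by fin_cases i <;> rfl)⟩

def pluckerVec (x y : EuclideanSpace ℂ (Fin 4)) : EuclideanSpace ℂ (Fin 6) :=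
  !₂[x 0 * y 1 - x 1 * y 0, x 0 * y 2 - x 2 * y 0, x 0 * y 3 - x 3 * y 0,
    x 1 * y 2 - x 2 * y 1, x 1 * y 3 - x 3 * y 1, x 2 * y 3 - x 3 * y 2]

lemma inner_wedge_eq_two_mul_inner_pluckerVec (x y x' y' : EuclideanSpace ℂ (Fin 4)) :
    ⟪wedge ![x, y], wedge ![x', y']⟫_ℂ = 2 * ⟪pluckerVec x y, pluckerVec x' y'⟫_ℂ := by
  rw [inner_wedge_pair]
  simp only [pluckerVec, PiLp.inner_apply, RCLike.inner_apply, Fin.sum_univ_four,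
    Fin.sum_univ_six, Matrix.cons_val, map_sub, map_mul]
  ring

def pluckerCoords (e : OrthonormalBasis (Fin 4) ℂ (EuclideanSpace ℂ (Fin 4))) (ψ : TensorPow 2 4) :
    EuclideanSpace ℂ (Fin 6) :=
  !₂[⟪wedge ![e 0, e 1], ψ⟫_ℂ, ⟪wedge ![e 0, e 2], ψ⟫_ℂ, ⟪wedge ![e 0, e 3], ψ⟫_ℂ,
    ⟪wedge ![e 1, e 2], ψ⟫_ℂ, ⟪wedge ![e 1, e 3], ψ⟫_ℂ, ⟪wedge ![e 2, e 3], ψ⟫_ℂ]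

section pluckerCoords

variable (e : OrthonormalBasis (Fin 4) ℂ (EuclideanSpace ℂ (Fin 4)))

lemma pluckerCoords_zero : pluckerCoords e 0 = 0 := by
  ext k
  fin_cases k <;> simp [pluckerCoords]

lemma pluckerCoords_wedge (v w : EuclideanSpace ℂ (Fin 4)) :
    pluckerCoords e (wedge ![v, w]) = (2 : ℂ) • pluckerVec (e.repr v) (e.repr w) := by
  ext k
  fin_cases k <;>
    simp [pluckerCoords, pluckerVec, inner_wedge_pair, OrthonormalBasis.repr_apply_apply] <;> ring

lemma inner_pluckerCoords {ψ ψ' : TensorPow 2 4} (hψ : IsSlater ψ) (hψ' : IsSlater ψ') :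
    ⟪pluckerCoords e ψ, pluckerCoords e ψ'⟫_ℂ = 2 * ⟪ψ, ψ'⟫_ℂ := by
  obtain ⟨v, w, rfl⟩ := hψ.exists_eq_wedge_pair
  obtain ⟨v', w', rfl⟩ := hψ'.exists_eq_wedge_pair
  rw [pluckerCoords_wedge, pluckerCoords_wedge, inner_smul_left, inner_smul_right,
    ← inner_wedge_linearIsometryEquiv e.repr, inner_wedge_eq_two_mul_inner_pluckerVec, map_ofNat]

lemma pluckerCoords_relation {ψ : TensorPow 2 4} (hψ : IsSlater ψ) :
    pluckerCoords e ψ 0 * pluckerCoords e ψ 5 - pluckerCoords e ψ 1 * pluckerCoords e ψ 4 +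
      pluckerCoords e ψ 2 * pluckerCoords e ψ 3 = 0 := by
  obtain ⟨v, w, rfl⟩ := hψ.exists_eq_wedge_pair
  simp [pluckerCoords_wedge, pluckerVec]
  ring

lemma pluckerCoords_ne_zero {ψ : TensorPow 2 4} (hψ : IsSlater ψ) (h : ψ ≠ 0) :
    pluckerCoords e ψ ≠ 0 := by
  intro h0
  have := inner_pluckerCoords e hψ hψ
  rw [h0, inner_zero_left, zero_eq_mul] at this
  exact h (inner_self_eq_zero.mp (this.resolve_left two_ne_zero))

end pluckerCoords

lemma exists_pluckerVec_eq {y : EuclideanSpace ℂ (Fin 6)} (h0 : y 0 = 0) (h1 : y 1 = 0)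
    (h23 : y 2 = 0 ∨ y 3 = 0) : ∃ x x', pluckerVec x x' = y := by
  -- If `y₁₂ = 0` the plane contains `e₃`; otherwise it lies in `⟨e₁, e₂, e₃⟩`.
  by_cases h3 : y 3 = 0
  · refine ⟨!₂[y 2, y 4, y 5, 0], !₂[0, 0, 0, 1], ?_⟩
    ext k
    fin_cases k <;> simp [pluckerVec, h0, h1, h3]
  · refine ⟨!₂[0, 1, 0, -(y 5 / y 3)], !₂[0, 0, y 3, y 4], ?_⟩
    ext k
    fin_cases k <;> simp [pluckerVec, h0, h1, h23.resolve_right h3]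
    field_simp

lemma exists_pluckerCoords_wedge_eq (e : OrthonormalBasis (Fin 4) ℂ (EuclideanSpace ℂ (Fin 4)))
    {y : EuclideanSpace ℂ (Fin 6)} (h0 : y 0 = 0) (h1 : y 1 = 0) (h23 : y 2 = 0 ∨ y 3 = 0) :
    ∃ v w, pluckerCoords e (wedge ![v, w]) = y := by
  obtain ⟨x, x', hx⟩ := exists_pluckerVec_eq (y := (2 : ℂ)⁻¹ • y) (by simp [h0]) (by simp [h1])
    (by simpa using h23)
  refine ⟨e.repr.symm x, e.repr.symm x', ?_⟩
  rw [pluckerCoords_wedge, LinearIsometryEquiv.apply_symm_apply,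
    LinearIsometryEquiv.apply_symm_apply, hx, smul_inv_smul₀ two_ne_zero]

lemma exists_orthonormalBasis_pluckerCoords_eq_single {a b₁ b₂ : EuclideanSpace ℂ (Fin 4)}
    (h₁ : wedge ![a, b₁] ≠ 0) (h₂ : wedge ![a, b₂] ≠ 0)
    (h₁₂ : ⟪wedge ![a, b₁], wedge ![a, b₂]⟫_ℂ = 0) :
    ∃ e : OrthonormalBasis (Fin 4) ℂ (EuclideanSpace ℂ (Fin 4)), ∃ s t : ℂ, s ≠ 0 ∧ t ≠ 0 ∧
      pluckerCoords e (wedge ![a, b₁]) = EuclideanSpace.single 0 s ∧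
      pluckerCoords e (wedge ![a, b₂]) = EuclideanSpace.single 1 t := by
  have hdim : finrank ℂ (EuclideanSpace ℂ (Fin 4)) = Fintype.card (Fin 4) := by simp
  set e := InnerProductSpace.gramSchmidtOrthonormalBasis hdim ![a, b₁, b₂, 0]
  have tri : ∀ i j, i < j → e.repr (![a, b₁, b₂, 0] i) j = 0 := fun i j h =>
    InnerProductSpace.gramSchmidtOrthonormalBasis_inv_triangular' hdim _ h
  have ha : ∀ j, 0 < j → e.repr a j = 0 := tri 0
  have hb₁ : ∀ j, 1 < j → e.repr b₁ j = 0 := tri 1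
  have hb₂ : e.repr b₂ 3 = 0 := tri 2 3 (by decide)
  have hψ₁ : pluckerCoords e (wedge ![a, b₁]) =
      EuclideanSpace.single 0 (pluckerCoords e (wedge ![a, b₁]) 0) := by
    ext k
    fin_cases k <;> simp [pluckerCoords_wedge, pluckerVec, ha, hb₁]
  set s := pluckerCoords e (wedge ![a, b₁]) 0
  have hs : s ≠ 0 := by
    simpa [hψ₁] using pluckerCoords_ne_zero e ⟨_, rfl⟩ h₁
  have hψ₂₀ : pluckerCoords e (wedge ![a, b₂]) 0 = 0 := by
    have h := inner_pluckerCoords e ⟨_, rfl⟩ ⟨_, rfl⟩ (ψ := wedge ![a, b₁]) (ψ' := wedge ![a, b₂])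
    rw [h₁₂, mul_zero, hψ₁, EuclideanSpace.inner_single_left] at h
    exact (mul_eq_zero.mp h).resolve_left (by simpa using hs)
  have hψ₂ : pluckerCoords e (wedge ![a, b₂]) =
      EuclideanSpace.single 1 (pluckerCoords e (wedge ![a, b₂]) 1) := by
    ext k
    fin_cases k
    · simpa using hψ₂₀
    all_goals simp [pluckerCoords_wedge, pluckerVec, ha, hb₂]
  set t := pluckerCoords e (wedge ![a, b₂]) 1
  have ht : t ≠ 0 := by
    simpa [hψ₂] using pluckerCoords_ne_zero e ⟨_, rfl⟩ h₂
  exact ⟨e, s, t, hs, ht, hψ₁, hψ₂⟩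

lemma exists_ne_zero_orthogonal_of_plucker_relation {ι : Type*} [Fintype ι]
    {X : ι → EuclideanSpace ℂ (Fin 6)}
    (hX : Pairwise fun i j => ⟪X i, X j⟫_ℂ = 0) {i₀ i₁ : ι} {s t : ℂ} (hs : s ≠ 0) (ht : t ≠ 0)
    (hX₀ : X i₀ = EuclideanSpace.single 0 s) (hX₁ : X i₁ = EuclideanSpace.single 1 t)
    (hrel : ∀ i, X i 0 * X i 5 - X i 1 * X i 4 + X i 2 * X i 3 = 0)
    (hcard : Fintype.card ι < 6) :
    ∃ y ≠ 0, (∀ i, ⟪X i, y⟫_ℂ = 0) ∧ y 0 = 0 ∧ y 1 = 0 ∧ (y 2 = 0 ∨ y 3 = 0) := by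
  have hsingle : ∀ {k : Fin 6} {a : ℂ} {x : EuclideanSpace ℂ (Fin 6)}, a ≠ 0 →
      ⟪EuclideanSpace.single k a, x⟫_ℂ = 0 → x k = 0 := fun ha h => by
    simpa [EuclideanSpace.inner_single_left, ha] using h
  have hX₂₃ : ∀ i, ⟪EuclideanSpace.single 2 (1 : ℂ), X i⟫_ℂ = 0 ∨
      ⟪EuclideanSpace.single 3 (1 : ℂ), X i⟫_ℂ = 0 := fun i => by
    simp only [EuclideanSpace.inner_single_left, map_one, one_mul]
    by_cases h₀ : i = i₀
    · simp [h₀, hX₀]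
    by_cases h₁ : i = i₁
    · simp [h₁, hX₁]
    have hi₀ : X i 0 = 0 := hsingle hs (hX₀ ▸ hX (Ne.symm h₀))
    have hi₁ : X i 1 = 0 := hsingle ht (hX₁ ▸ hX (Ne.symm h₁))
    exact mul_eq_zero.mp (by simpa [hi₀, hi₁] using hrel i)
  obtain ⟨y, hy, hyX, hy₂₃⟩ := exists_ne_zero_orthogonal_of_inner_eq_zero_or hX
    (by simp [EuclideanSpace.inner_single_left]) hX₂₃ (by simpa using hcard)
  exact ⟨y, hy, hyX, hsingle hs (hX₀ ▸ hyX i₀), hsingle ht (hX₁ ▸ hyX i₁),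
    by simpa [EuclideanSpace.inner_single_left] using hy₂₃⟩

/-- Five pairwise orthogonal nonzero decomposable 2-vectors in `⋀² ℂ⁴` in which
`ψ 0 = a ∧ b₁` and `ψ 1 = a ∧ b₂` share a common factor do not form an FUPB:
some nonzero decomposable 2-vector is orthogonal to all five. -/
theorem five_slaters_with_common_factor_not_FUPB
    (ψ : Fin 5 → TensorPow 2 4) (a b₁ b₂ : EuclideanSpace ℂ (Fin 4))
    (h0 : ψ 0 = wedge ![a, b₁]) (h1 : ψ 1 = wedge ![a, b₂])
    (hslater : ∀ i, IsSlater (ψ i)) (hne : ∀ i, ψ i ≠ 0)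
    (horth : ∀ i j, i ≠ j → ⟪ψ i, ψ j⟫_ℂ = 0) :
    ∃ v w : EuclideanSpace ℂ (Fin 4),
      wedge ![v, w] ≠ 0 ∧ ∀ i, ⟪ψ i, wedge ![v, w]⟫_ℂ = 0 := by
  obtain ⟨e, s, t, hs, ht, he₀, he₁⟩ := exists_orthonormalBasis_pluckerCoords_eq_single
    (h0 ▸ hne 0) (h1 ▸ hne 1) (h0 ▸ h1 ▸ horth 0 1 (by decide))
  obtain ⟨y, hy, hyψ, hy₀, hy₁, hy₂₃⟩ := exists_ne_zero_orthogonal_of_plucker_relation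
    (X := fun i => pluckerCoords e (ψ i)) (i₀ := 0) (i₁ := 1)
    (fun i j hij => by simp [inner_pluckerCoords e (hslater i) (hslater j), horth i j hij])
    hs ht (h0 ▸ he₀) (h1 ▸ he₁) (fun i => pluckerCoords_relation e (hslater i)) (by simp)
  obtain ⟨v, w, hvw⟩ := exists_pluckerCoords_wedge_eq e hy₀ hy₁ hy₂₃
  refine ⟨v, w, fun h => hy (by rw [← hvw, h, pluckerCoords_zero]), fun i => ?_⟩
  have h := inner_pluckerCoords e (hslater i) ⟨_, rfl⟩ (ψ' := wedge ![v, w])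
  rw [hvw, hyψ i] at h
  exact (mul_eq_zero.mp h.symm).resolve_left two_ne_zero
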